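/- arXiv:1304.3380 — 4 statements merged into one kernel-verified Lean document; each statement's English description precedes it below -/
import Mathlib

section
/- The explicit update formula solves the implicit Euler-backward equation up to normalization: let C̄ be unimodular symmetric positive definite and C_i^n symmetric positive definite, κ > 0. Define Φ := C_i^n + κ·C̄ and X := (1 - (κ/3)·tr(C·Φ^{-1}))·Φ where C := C̄ (unimodular case). Then X satisfies the Euler-backward equation X = C_i^n + κ·(C̄·X^{-1} - (1/3)tr(C̄·X^{-1})·I)·X, provided 1 - (κ/3)·tr(C̄·Φ^{-1}) > 0. -/
open Matrix

/-- Deviatoric part of a 3×3 matrix. -/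
noncomputable def dev (A : Matrix (Fin 3) (Fin 3) ℝ) : Matrix (Fin 3) (Fin 3) ℝ :=
  A - (A.trace / 3) • (1 : Matrix (Fin 3) (Fin 3) ℝ)

/-! `Φ` is positive definite, hence invertible. Since `X = c • Φ` with `c ≠ 0`, the term
`(C̄ X⁻¹)^D X` equals `C̄ - (tr(C̄ Φ⁻¹)/3) • Φ`, whatever `c` is; substituting `C_i^n = Φ - κ C̄` turns
the right-hand side into `(1 - (κ/3) tr(C̄ Φ⁻¹)) • Φ = X`. -/

theorem dev_mul_inv_mul (A : Matrix (Fin 3) (Fin 3) ℝ) {X : Matrix (Fin 3) (Fin 3) ℝ}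
    (hX : IsUnit X.det) : dev (A * X⁻¹) * X = A - ((A * X⁻¹).trace / 3) • X := by
  rw [dev, sub_mul, Matrix.mul_assoc, nonsing_inv_mul _ hX, mul_one, smul_mul, one_mul]

theorem dev_mul_inv_mul_smul (A : Matrix (Fin 3) (Fin 3) ℝ) {Φ : Matrix (Fin 3) (Fin 3) ℝ}
    (hΦ : IsUnit Φ.det) {c : ℝ} (hc : c ≠ 0) :
    dev (A * (c • Φ)⁻¹) * (c • Φ) = A - ((A * Φ⁻¹).trace / 3) • Φ := by
  have hcΦ : IsUnit (c • Φ).det := by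
    rw [det_smul]
    exact (IsUnit.pow _ (Ne.isUnit hc)).mul hΦ
  have hinv : (c • Φ)⁻¹ = c⁻¹ • Φ⁻¹ := inv_eq_left_inv <| by
    rw [smul_mul_smul_comm, inv_mul_cancel₀ hc, one_smul, nonsing_inv_mul _ hΦ]
  rw [dev_mul_inv_mul A hcΦ, hinv, Matrix.mul_smul, trace_smul, smul_eq_mul, smul_smul]
  congr 2
  field_simp

theorem explicit_solves_EBM_general (Cbar Cin : Matrix (Fin 3) (Fin 3) ℝ)
    (hCbar : Cbar.PosDef) (hCin : Cin.PosDef)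
    (κ : ℝ) (hκ : 0 < κ)
    (Φ : Matrix (Fin 3) (Fin 3) ℝ) (hΦ : Φ = Cin + κ • Cbar)
    (X : Matrix (Fin 3) (Fin 3) ℝ)
    (hX : X = (1 - κ / 3 * (Cbar * Φ⁻¹).trace) • Φ)
    (hpos : 0 < 1 - κ / 3 * (Cbar * Φ⁻¹).trace) :
    X = Cin + κ • (dev (Cbar * X⁻¹) * X) := by
  have hΦ_det : IsUnit Φ.det := by
    rw [← isUnit_iff_isUnit_det, hΦ]
    exact (hCin.add (hCbar.smul hκ)).isUnit
  have hCin_eq : Cin = Φ - κ • Cbar := by rw [hΦ]; abel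
  rw [hX, dev_mul_inv_mul_smul Cbar hΦ_det hpos.ne', hCin_eq]
  module

/-- The closed-form expression solves the implicit Euler-backward equation. -/
theorem explicit_solves_EBM (Cbar Cin : Matrix (Fin 3) (Fin 3) ℝ)
    (hCbar : Cbar.PosDef) (hCbar_det : Cbar.det = 1) (hCin : Cin.PosDef)
    (κ : ℝ) (hκ : 0 < κ)
    (Φ : Matrix (Fin 3) (Fin 3) ℝ) (hΦ : Φ = Cin + κ • Cbar)
    (X : Matrix (Fin 3) (Fin 3) ℝ)
    (hX : X = (1 - κ / 3 * (Cbar * Φ⁻¹).trace) • Φ)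
    (hpos : 0 < 1 - κ / 3 * (Cbar * Φ⁻¹).trace) :
    X = Cin + κ • (dev (Cbar * X⁻¹) * X) :=
  explicit_solves_EBM_general Cbar Cin hCbar hCin κ hκ Φ hΦ X hX hpos
end

section
/- Monotone energy decay during stress relaxation: let C_i⁰ be symmetric positive definite with det C_i⁰ = 1, and define for t ≥ 0, Φ(t) := C_i⁰ + t·I and C_i(t) := (det Φ(t))^{-1/3}·Φ(t). Then the function f(t) := tr(C_i(t)^{-1}) satisfies f'(t) = -(det Φ(t))^{1/3}·‖(Φ(t)^{-1})^D‖² ≤ 0, where A^D = A - (1/3)tr(A)I and ‖·‖ is the Frobenius norm; in particular f is nonincreasing. -/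
/-!
Write `d = det Φ` and `B = Φ⁻¹`. Since `C_i⁻¹ = d^{1/3} B`, the energy is `f = d^{1/3} tr B`.
Jacobi's formula `d' = d tr B` and `(Φ⁻¹)' = -B²` give `f' = d^{1/3} (tr(B)²/3 - tr(B²))`, and for
symmetric `B` the bracket is `-‖dev B‖²`.
-/

open Matrix

/-- Squared Frobenius norm of a real matrix. -/
noncomputable def frobSq (A : Matrix (Fin 3) (Fin 3) ℝ) : ℝ :=
  (A * Aᵀ).trace

lemma frobSq_nonneg (A : Matrix (Fin 3) (Fin 3) ℝ) : 0 ≤ frobSq A := by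
  simpa [frobSq] using (posSemidef_self_mul_conjTranspose A).trace_nonneg

lemma frobSq_dev (A : Matrix (Fin 3) (Fin 3) ℝ) :
    frobSq (dev A) = (A * Aᵀ).trace - A.trace ^ 2 / 3 := by
  simp only [frobSq, dev, transpose_sub, transpose_smul, transpose_one, sub_mul, Matrix.mul_sub,
    Matrix.smul_mul, Matrix.mul_smul, mul_one, one_mul, smul_smul, trace_sub, trace_smul,
    trace_one, trace_transpose, smul_eq_mul, Fintype.card_fin]
  ring

section

variable {n : Type*} [Fintype n] [DecidableEq n] {𝕜 : Type*} [NontriviallyNormedField 𝕜]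

open Polynomial in
theorem hasDerivAt_det_one_add_smul (M : Matrix n n 𝕜) :
    HasDerivAt (fun r : 𝕜 => (1 + r • M).det) M.trace 0 := by
  have h := (det (1 + (X : 𝕜[X]) • M.map C)).hasDerivAt 0
  rw [derivative_det_one_add_X_smul] at h
  convert h using 2 with r
  rw [← coe_evalRingHom, RingHom.map_det]
  congr 1
  ext i j
  by_cases hij : i = j <;> simp [one_apply, hij] <;> ring

theorem hasDerivAt_det_add_smul_one (A : Matrix n n 𝕜) {t : 𝕜} (ht : IsUnit (A + t • 1).det) :
    HasDerivAt (fun s => (A + s • 1).det) ((A + t • 1).det * ((A + t • 1)⁻¹).trace) t := by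
  have hfactor : ∀ s : 𝕜, A + s • 1 = (A + t • 1) * (1 + (s - t) • (A + t • 1)⁻¹) := by
    intro s
    rw [mul_add, mul_one, Matrix.mul_smul, mul_nonsing_inv _ ht, add_assoc, ← add_smul,
      add_sub_cancel]
  have hdet : (fun s => (A + s • 1).det) =
      fun s => (A + t • 1).det * (1 + (s - t) • (A + t • 1)⁻¹).det :=
    funext fun s => by rw [hfactor s, det_mul]
  rw [hdet]
  have h : HasDerivAt (fun r => (1 + r • (A + t • 1)⁻¹).det) (A + t • 1)⁻¹.trace (t - t) := by
    rw [sub_self]; exact hasDerivAt_det_one_add_smul _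
  exact (h.comp_sub_const t t).const_mul _

section

attribute [local instance] Matrix.linftyOpNormedRing Matrix.linftyOpNormedAlgebra

theorem hasDerivAt_trace_inv_add_smul_one {𝕜 : Type*} [RCLike 𝕜] (A : Matrix n n 𝕜) {t : 𝕜}
    (ht : IsUnit (A + t • 1).det) :
    HasDerivAt (fun s => ((A + s • 1)⁻¹).trace) (-((A + t • 1)⁻¹ * (A + t • 1)⁻¹).trace) t := by
  obtain ⟨u, hu⟩ : IsUnit (A + t • 1) := (isUnit_iff_isUnit_det _).mpr ht
  have hlin : HasDerivAt (fun s : 𝕜 => A + s • 1) 1 t :=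
    (((hasDerivAt_id' t).smul_const (1 : Matrix n n 𝕜)).const_add A).congr_deriv (one_smul 𝕜 _)
  have hinv := (hasFDerivAt_ringInverse (𝕜 := 𝕜) u).comp_hasDerivAt_of_eq t hlin hu
  have htr := (traceLinearMap n 𝕜 𝕜).toContinuousLinearMap.hasFDerivAt.comp_hasDerivAt t hinv
  refine (htr.congr_deriv ?_).congr_of_eventuallyEq (Filter.Eventually.of_forall fun s => ?_)
  · change (-((↑u⁻¹ : Matrix n n 𝕜) * 1 * (↑u⁻¹ : Matrix n n 𝕜))).trace = _
    rw [mul_one, trace_neg, coe_units_inv, hu]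
  · simp [nonsing_inv_eq_ringInverse]

end

theorem inv_rpow_neg_det_smul {A : Matrix n n ℝ} (hA : 0 < A.det) (p : ℝ) :
    (A.det ^ (-p) • A)⁻¹ = A.det ^ p • A⁻¹ := by
  refine inv_eq_right_inv ?_
  rw [Matrix.smul_mul, Matrix.mul_smul, smul_smul, ← Real.rpow_add hA, neg_add_cancel,
    Real.rpow_zero, one_smul, mul_nonsing_inv _ (isUnit_iff_ne_zero.mpr hA.ne')]

end

theorem posDef_add_smul_one {n : Type*} [DecidableEq n] {A : Matrix n n ℝ} (hA : A.PosDef)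
    {t : ℝ} (ht : 0 ≤ t) : (A + t • 1).PosDef := by
  refine hA.add_posSemidef ?_
  rw [smul_one_eq_diagonal]
  exact posSemidef_diagonal_iff.mpr fun _ => ht

theorem hasDerivAt_rpow_det_mul_trace_inv (A : Matrix (Fin 3) (Fin 3) ℝ) (hA : A.IsSymm) {t : ℝ}
    (ht : (A + t • 1).det ≠ 0) :
    HasDerivAt (fun s => (A + s • 1).det ^ ((1 : ℝ) / 3) * ((A + s • 1)⁻¹).trace)
      (-((A + t • 1).det ^ ((1 : ℝ) / 3) * frobSq (dev ((A + t • 1)⁻¹)))) t := by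
  have hunit : IsUnit (A + t • 1).det := isUnit_iff_ne_zero.mpr ht
  have hsymm : ((A + t • 1)⁻¹)ᵀ = (A + t • 1)⁻¹ := (hA.add (isSymm_one.smul t)).inv
  have hdet := (hasDerivAt_det_add_smul_one A hunit).rpow_const (p := 1 / 3) (Or.inl ht)
  refine (hdet.mul (hasDerivAt_trace_inv_add_smul_one A hunit)).congr_deriv ?_
  rw [frobSq_dev, hsymm, Real.rpow_sub_one ht]
  field_simp
  ring

theorem hasDerivAt_trace_inv_rpow_det_smul (A : Matrix (Fin 3) (Fin 3) ℝ) (hA : A.IsSymm) {t : ℝ}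
    (ht : 0 < (A + t • 1).det) :
    HasDerivAt (fun s => (((A + s • 1).det ^ (-(1 : ℝ) / 3) • (A + s • 1))⁻¹).trace)
      (-((A + t • 1).det ^ ((1 : ℝ) / 3) * frobSq (dev ((A + t • 1)⁻¹)))) t := by
  have hpos : ∀ᶠ s in nhds t, 0 < (A + s • 1).det :=
    (hasDerivAt_det_add_smul_one A (isUnit_iff_ne_zero.mpr ht.ne')).continuousAt.eventually
      (eventually_gt_nhds ht)
  refine (hasDerivAt_rpow_det_mul_trace_inv A hA ht.ne').congr_of_eventuallyEq ?_
  filter_upwards [hpos] with s hs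
  rw [neg_div, inv_rpow_neg_det_smul hs, trace_smul, smul_eq_mul]

theorem energy_decay_relaxation_general (Ci0 : Matrix (Fin 3) (Fin 3) ℝ)
    (hCi0 : Ci0.PosDef) (hCi0_symm : Ci0.IsSymm)
    (Φ : ℝ → Matrix (Fin 3) (Fin 3) ℝ)
    (hΦ : ∀ t, Φ t = Ci0 + t • (1 : Matrix (Fin 3) (Fin 3) ℝ))
    (Ci : ℝ → Matrix (Fin 3) (Fin 3) ℝ)
    (hCi : ∀ t, Ci t = ((Φ t).det ^ (-(1 : ℝ) / 3)) • Φ t)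
    (f : ℝ → ℝ) (hf : ∀ t, f t = ((Ci t)⁻¹).trace) :
    (∀ t, 0 ≤ t →
        HasDerivAt f (-((Φ t).det ^ ((1 : ℝ) / 3) * frobSq (dev ((Φ t)⁻¹)))) t ∧
        -((Φ t).det ^ ((1 : ℝ) / 3) * frobSq (dev ((Φ t)⁻¹))) ≤ 0) ∧
      AntitoneOn f (Set.Ici 0) := by
  obtain rfl : Φ = fun t => Ci0 + t • 1 := funext hΦ
  obtain rfl : Ci = fun t => (Ci0 + t • 1).det ^ (-(1 : ℝ) / 3) • (Ci0 + t • 1) := funext hCi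
  obtain rfl := funext hf
  have hderiv : ∀ t : ℝ, 0 ≤ t → HasDerivAt
      (fun s => (((Ci0 + s • 1).det ^ (-(1 : ℝ) / 3) • (Ci0 + s • 1))⁻¹).trace)
      (-((Ci0 + t • 1).det ^ ((1 : ℝ) / 3) * frobSq (dev ((Ci0 + t • 1)⁻¹)))) t := fun t ht =>
    hasDerivAt_trace_inv_rpow_det_smul Ci0 hCi0_symm (posDef_add_smul_one hCi0 ht).det_pos
  have hnonpos : ∀ t : ℝ, 0 ≤ t →
      -((Ci0 + t • 1).det ^ ((1 : ℝ) / 3) * frobSq (dev ((Ci0 + t • 1)⁻¹))) ≤ 0 := fun t ht =>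
    neg_nonpos.mpr <| mul_nonneg (Real.rpow_nonneg (posDef_add_smul_one hCi0 ht).det_pos.le _)
      (frobSq_nonneg _)
  refine ⟨fun t ht => ⟨hderiv t ht, hnonpos t ht⟩, ?_⟩
  exact antitoneOn_of_hasDerivWithinAt_nonpos (convex_Ici 0)
    (fun t ht => (hderiv t ht).continuousAt.continuousWithinAt)
    (fun t ht => (hderiv t (interior_subset ht)).hasDerivWithinAt)
    (fun t ht => hnonpos t (interior_subset ht))

/-- Monotone energy decay during stress relaxation. -/
theorem energy_decay_relaxation (Ci0 : Matrix (Fin 3) (Fin 3) ℝ)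
    (hCi0 : Ci0.PosDef) (hCi0_symm : Ci0.IsSymm) (hCi0_det : Ci0.det = 1)
    (Φ : ℝ → Matrix (Fin 3) (Fin 3) ℝ)
    (hΦ : ∀ t, Φ t = Ci0 + t • (1 : Matrix (Fin 3) (Fin 3) ℝ))
    (Ci : ℝ → Matrix (Fin 3) (Fin 3) ℝ)
    (hCi : ∀ t, Ci t = ((Φ t).det ^ (-(1 : ℝ) / 3)) • Φ t)
    (f : ℝ → ℝ) (hf : ∀ t, f t = ((Ci t)⁻¹).trace) :
    (∀ t, 0 ≤ t →
        HasDerivAt f (-((Φ t).det ^ ((1 : ℝ) / 3) * frobSq (dev ((Φ t)⁻¹)))) t ∧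
        -((Φ t).det ^ ((1 : ℝ) / 3) * frobSq (dev ((Φ t)⁻¹))) ≤ 0) ∧
      AntitoneOn f (Set.Ici 0) :=
  energy_decay_relaxation_general Ci0 hCi0 hCi0_symm Φ hΦ Ci hCi f hf
end

section
/- Stability bound of the update: for symmetric positive definite C_i^n with det C_i^n = 1, unimodular symmetric positive definite C̄, and κ ≥ 0, the eigenvalues of the update C_i^{n+1} := unimodular part of (C_i^n + κ C̄) are bounded: λ_max(C_i^{n+1}) ≤ (λ_max(C_i^n) + κ·λ_max(C̄)) / (det(C_i^n + κ C̄))^{1/3}, and det(C_i^n + κ C̄) ≥ det(C_i^n) = 1. Hence the numerical solution remains bounded for arbitrary κ in terms of C_i^n and C̄. -/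
/-!
In the Loewner order a Hermitian matrix lies below `λ_max • 1`, so
`C + κ C̄ ≤ (λ_max C + κ λ_max C̄) • 1`, and rescaling by `det (C + κ C̄) ^ (-1/3)` bounds the
eigenvalues of the update. For the determinant, conjugating `C ≤ C + κ C̄` by `C ^ (-1/2)` gives
`1 ≤ C ^ (-1/2) (C + κ C̄) C ^ (-1/2)`; all eigenvalues of the right side are at least `1`, so its
determinant `det (C + κ C̄) / det C` is at least `1`.
-/

open scoped MatrixOrder ComplexOrder

namespace Matrix

variable {𝕜 : Type*} [RCLike 𝕜] {n : Type*} [Fintype n] [DecidableEq n] {A B : Matrix n n 𝕜}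

theorem IsHermitian.le_smul_one_iff (hA : A.IsHermitian) {r : ℝ} :
    A ≤ r • 1 ↔ ∀ i, hA.eigenvalues i ≤ r := by
  rw [← Algebra.algebraMap_eq_smul_one, le_algebraMap_iff_spectrum_le hA.isSelfAdjoint,
    hA.spectrum_real_eq_range_eigenvalues, Set.forall_mem_range]

theorem IsHermitian.one_le_iff (hA : A.IsHermitian) :
    1 ≤ A ↔ ∀ i, 1 ≤ hA.eigenvalues i := by
  rw [CFC.one_le_iff (R := ℝ) A hA.isSelfAdjoint, hA.spectrum_real_eq_range_eigenvalues,
    Set.forall_mem_range]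

theorem IsHermitian.le_iSup_eigenvalues_smul_one (hA : A.IsHermitian) :
    A ≤ (⨆ i, hA.eigenvalues i) • 1 :=
  hA.le_smul_one_iff.mpr fun i => le_ciSup (Set.finite_range _).bddAbove i

theorem one_le_det_of_one_le (hA : 1 ≤ A) : 1 ≤ A.det := by
  have hH : A.IsHermitian := by
    simpa using (le_iff.mp hA).1.add (isHermitian_one (n := n) (α := 𝕜))
  rw [hH.det_eq_prod_eigenvalues, ← RCLike.ofReal_prod, ← RCLike.ofReal_one,
    RCLike.ofReal_le_ofReal]
  exact Finset.one_le_prod fun i _ => hH.one_le_iff.mp hA i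

theorem PosDef.det_le_det_of_le (hA : A.PosDef) (hAB : A ≤ B) : A.det ≤ B.det := by
  set R := CFC.sqrt A
  have hR : IsUnit R.det := (isUnit_iff_isUnit_det R).mp
    (IsStrictlyPositive.sqrt A hA.isStrictlyPositive).isUnit
  have hRR : R * R = A := CFC.sqrt_mul_sqrt_self A hA.posSemidef.nonneg
  have hRstar : star R⁻¹ = R⁻¹ := by
    rw [star_eq_conjTranspose, conjTranspose_nonsing_inv, ← star_eq_conjTranspose,
      (CFC.sqrt_nonneg A).isSelfAdjoint.star_eq]
  have hT : 1 ≤ R⁻¹ * B * R⁻¹ := by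
    have h := star_left_conjugate_le_conjugate hAB R⁻¹
    rwa [hRstar, ← hRR, ← Matrix.mul_assoc, nonsing_inv_mul R hR, Matrix.one_mul,
      mul_nonsing_inv R hR] at h
  have hB : R * (R⁻¹ * B * R⁻¹) * R = B := by
    rw [Matrix.mul_assoc R⁻¹, mul_nonsing_inv_cancel_left R _ hR,
      nonsing_inv_mul_cancel_right R _ hR]
  calc A.det = A.det * 1 := (mul_one _).symm
    _ ≤ A.det * (R⁻¹ * B * R⁻¹).det :=
      mul_le_mul_of_nonneg_left (one_le_det_of_one_le hT) hA.det_pos.le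
    _ = (R * (R⁻¹ * B * R⁻¹) * R).det := by
      simp only [← hRR, det_mul]; ring
    _ = B.det := by rw [hB]

end Matrix

theorem update_stability_bound_general (Cin Cbar : Matrix (Fin 3) (Fin 3) ℝ)
    (hCin : Cin.PosDef) (hCin_det : Cin.det = 1)
    (hCbar : Cbar.PosDef)
    (κ : ℝ) (hκ : 0 ≤ κ)
    (Cnext : Matrix (Fin 3) (Fin 3) ℝ)
    (hCnext : Cnext = ((Cin + κ • Cbar).det ^ (-(1 : ℝ) / 3)) • (Cin + κ • Cbar))
    (hH : Cnext.IsHermitian) :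
    (⨆ i, hH.eigenvalues i) ≤
      ((⨆ i, hCin.1.eigenvalues i) + κ * ⨆ i, hCbar.1.eigenvalues i) /
        (Cin + κ • Cbar).det ^ ((1 : ℝ) / 3) ∧
    1 ≤ (Cin + κ • Cbar).det := by
  set a := ⨆ i, hCin.1.eigenvalues i
  set b := ⨆ i, hCbar.1.eigenvalues i
  set M := Cin + κ • Cbar
  have hdet : 1 ≤ M.det :=
    hCin_det ▸ hCin.det_le_det_of_le (le_add_of_nonneg_right (hCbar.posSemidef.smul hκ).nonneg)
  have hM : M ≤ (a + κ * b) • 1 := by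
    rw [add_smul, mul_smul]
    exact add_le_add hCin.1.le_iSup_eigenvalues_smul_one
      (smul_le_smul_of_nonneg_left hCbar.1.le_iSup_eigenvalues_smul_one hκ)
  have hnext : Cnext ≤ (M.det ^ (-(1 : ℝ) / 3) * (a + κ * b)) • 1 := by
    rw [hCnext, mul_smul]
    exact smul_le_smul_of_nonneg_left hM (by positivity)
  refine ⟨ciSup_le fun i => (hH.le_smul_one_iff.mp hnext i).trans_eq ?_, hdet⟩
  rw [neg_div, Real.rpow_neg (by positivity), inv_mul_eq_div]

/-- Stability bound of the explicit update: the largest eigenvalue of the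
corrected update is controlled, and the determinant before normalization is
at least one. -/
theorem update_stability_bound (Cin Cbar : Matrix (Fin 3) (Fin 3) ℝ)
    (hCin : Cin.PosDef) (hCin_det : Cin.det = 1)
    (hCbar : Cbar.PosDef) (hCbar_det : Cbar.det = 1)
    (κ : ℝ) (hκ : 0 ≤ κ)
    (Cnext : Matrix (Fin 3) (Fin 3) ℝ)
    (hCnext : Cnext = ((Cin + κ • Cbar).det ^ (-(1 : ℝ) / 3)) • (Cin + κ • Cbar))
    (hH : Cnext.IsHermitian) :
    (⨆ i, hH.eigenvalues i) ≤
      ((⨆ i, hCin.1.eigenvalues i) + κ * ⨆ i, hCbar.1.eigenvalues i) /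
        (Cin + κ • Cbar).det ^ ((1 : ℝ) / 3) ∧
    1 ≤ (Cin + κ • Cbar).det :=
  update_stability_bound_general Cin Cbar hCin hCin_det hCbar κ hκ Cnext hCnext hH
end

section
/- Reduction to one-dimensional flow: suppose C̄ is a constant unimodular symmetric positive definite 3×3 matrix and φ : [t₀, T) → ℝ solves φ' = (μ/η)·(det(C_i⁰ + φ·C̄))^{1/3} with φ(t₀) = 0, where C_i⁰ is symmetric positive definite with det C_i⁰ = 1. Then C_i(t) := (det(C_i⁰ + φ(t)C̄))^{-1/3}·(C_i⁰ + φ(t)C̄) solves the matrix ODE Ċ_i = (μ/η)·(C̄ C_i^{-1})^D·C_i with C_i(t₀) = C_i⁰. -/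
/-!
Write `M = C_i⁰ + φ C̄` and `d = det M`. Jacobi's formula gives `d' = d · tr (C̄ M⁻¹) · φ'`, so the
unimodular part `d^(-1/3) M` moves with velocity `d^(-1/3) φ' (C̄ - tr (C̄ M⁻¹)/3 · M)`. The
flow rule `φ' = (μ/η) d^(1/3)` turns the prefactor into `μ/η`, and `dev (C̄ C⁻¹) C` is unchanged
when `C` is rescaled, so it also equals `C̄ - tr (C̄ M⁻¹)/3 · M`. Along the flow `φ' ≥ 0`, hence
`φ ≥ 0` and `M` stays positive definite, which keeps `d > 0` and all powers of `d` meaningful.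
-/

open Matrix

section Jacobi

open Polynomial

variable {n : Type*} [Fintype n] [DecidableEq n]

theorem Matrix.eval_det_one_add_X_smul {R : Type*} [CommRing R] (N : Matrix n n R) (r : R) :
    (det (1 + (X : R[X]) • N.map C)).eval r = det (1 + r • N) := by
  rw [← coe_evalRingHom, RingHom.map_det]
  congr 1
  ext i j
  by_cases hij : i = j <;> simp [hij] <;> ring

theorem Matrix.hasDerivAt_det_add_smul {𝕜 : Type*} [NontriviallyNormedField 𝕜]
    (A B : Matrix n n 𝕜) {x : 𝕜} (hx : IsUnit (A + x • B).det) :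
    HasDerivAt (fun s => (A + s • B).det)
      ((A + x • B).det * ((A + x • B)⁻¹ * B).trace) x := by
  set M := A + x • B
  set P := det (1 + (X : 𝕜[X]) • (M⁻¹ * B).map C)
  have hfactor : ∀ s, (A + s • B).det = M.det * P.eval (s - x) := fun s => by
    rw [eval_det_one_add_X_smul, ← det_mul, Matrix.mul_add, Matrix.mul_one, Matrix.mul_smul,
      ← Matrix.mul_assoc, mul_nonsing_inv _ hx, Matrix.one_mul, add_assoc, ← add_smul,
      add_sub_cancel]
  have hP : HasDerivAt (fun s => P.eval (s - x)) (P.derivative.eval 0) x := by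
    simpa using (P.hasDerivAt (x - x)).comp_sub_const x x
  rw [funext hfactor, ← derivative_det_one_add_X_smul]
  exact hP.const_mul _

end Jacobi

/-- For `x < 0`, `x ^ p = exp (log x * p) * cos (p * π)`, which is still nonnegative here. -/
theorem Real.rpow_nonneg_of_abs_le_half (x : ℝ) {p : ℝ} (hp : |p| ≤ 1 / 2) : 0 ≤ x ^ p := by
  rcases le_or_gt 0 x with hx | hx
  · exact rpow_nonneg hx p
  · rw [rpow_def_of_neg hx]
    refine mul_nonneg (exp_nonneg _) (cos_nonneg_of_mem_Icc ⟨?_, ?_⟩) <;>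
      nlinarith [abs_le.mp hp, pi_pos]

theorem HasDerivAt.rpow_const_of_logDeriv {f : ℝ → ℝ} {g x : ℝ} (p : ℝ)
    (hf : HasDerivAt f (f x * g) x) (hx : 0 < f x) :
    HasDerivAt (fun s => f s ^ p) (p * f x ^ p * g) x := by
  convert hf.rpow_const (p := p) (Or.inl hx.ne') using 1
  rw [Real.rpow_sub_one hx.ne']
  field_simp

theorem dev_mul_inv_smul_mul_smul (B M : Matrix (Fin 3) (Fin 3) ℝ) {c : ℝ} (hc : c ≠ 0)
    (hM : IsUnit M.det) :
    dev (B * (c • M)⁻¹) * (c • M) = B - ((B * M⁻¹).trace / 3) • M := by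
  have hinv : (c • M)⁻¹ = c⁻¹ • M⁻¹ :=
    inv_eq_left_inv (by simp [hc, smul_smul, nonsing_inv_mul _ hM])
  rw [hinv, dev]
  simp only [Matrix.sub_mul, Matrix.mul_smul, Matrix.smul_mul, Matrix.one_mul,
    Matrix.mul_assoc, nonsing_inv_mul _ hM, Matrix.mul_one, trace_smul]
  rw [smul_sub, smul_smul, mul_inv_cancel₀ hc, one_smul, smul_smul, smul_eq_mul]
  congr 2
  field_simp

noncomputable def unimodularPart (M : Matrix (Fin 3) (Fin 3) ℝ) : Matrix (Fin 3) (Fin 3) ℝ :=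
  M.det ^ (-(1 : ℝ) / 3) • M

theorem unimodularPart_of_det_eq_one {M : Matrix (Fin 3) (Fin 3) ℝ} (h : M.det = 1) :
    unimodularPart M = M := by
  simp [unimodularPart, h]

theorem hasDerivAt_unimodularPart_pencil_apply {A B : Matrix (Fin 3) (Fin 3) ℝ} {φ : ℝ → ℝ}
    {k t : ℝ} (hφ : HasDerivAt φ (k * (A + φ t • B).det ^ ((1 : ℝ) / 3)) t)
    (hdet : 0 < (A + φ t • B).det) (i j : Fin 3) :
    HasDerivAt (fun s => unimodularPart (A + φ s • B) i j)
      ((k • (dev (B * (unimodularPart (A + φ t • B))⁻¹) * unimodularPart (A + φ t • B))) i j)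
      t := by
  set M := A + φ t • B
  set d := M.det
  set φ' := k * d ^ ((1 : ℝ) / 3)
  have hunit : IsUnit d := hdet.ne'.isUnit
  have hdet_deriv : HasDerivAt (fun s => (A + φ s • B).det) (d * ((B * M⁻¹).trace * φ')) t := by
    refine ((hasDerivAt_det_add_smul A B hunit).comp t hφ).congr_deriv ?_
    rw [trace_mul_comm, mul_assoc]
  have hscale : HasDerivAt (fun s => (A + φ s • B).det ^ (-(1 : ℝ) / 3))
      (-(1 : ℝ) / 3 * d ^ (-(1 : ℝ) / 3) * ((B * M⁻¹).trace * φ')) t :=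
    hdet_deriv.rpow_const_of_logDeriv _ hdet
  have hentry : HasDerivAt (fun s => (A + φ s • B) i j) (φ' * B i j) t := by
    simpa using (hφ.mul_const (B i j)).const_add (A i j)
  have hcancel : d ^ (-(1 : ℝ) / 3) * φ' = k := by
    rw [mul_left_comm, ← Real.rpow_add hdet]
    norm_num
  rw [unimodularPart, dev_mul_inv_smul_mul_smul B M (Real.rpow_pos_of_pos hdet _).ne' hunit]
  refine (hscale.mul hentry).congr_deriv ?_
  simp only [Matrix.smul_apply, Matrix.sub_apply, smul_eq_mul]
  linear_combination (B i j - (B * M⁻¹).trace / 3 * M i j) * hcancel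

theorem reduction_to_one_dimensional_flow_general (μ η t₀ T : ℝ) (hμ : 0 < μ) (hη : 0 < η)
    (Cbar Ci0 : Matrix (Fin 3) (Fin 3) ℝ)
    (hCbar : Cbar.PosDef)
    (hCi0 : Ci0.PosDef) (hCi0_det : Ci0.det = 1)
    (φ : ℝ → ℝ) (hφ₀ : φ t₀ = 0)
    (hφ : ∀ t ∈ Set.Ico t₀ T,
      HasDerivAt φ (μ / η * (Ci0 + φ t • Cbar).det ^ ((1 : ℝ) / 3)) t)
    (Ci : ℝ → Matrix (Fin 3) (Fin 3) ℝ)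
    (hCi : ∀ t, Ci t =
      ((Ci0 + φ t • Cbar).det ^ (-(1 : ℝ) / 3)) • (Ci0 + φ t • Cbar)) :
    Ci t₀ = Ci0 ∧
      ∀ t ∈ Set.Ico t₀ T, ∀ i j,
        HasDerivAt (fun s => Ci s i j)
          (((μ / η) • (dev (Cbar * (Ci t)⁻¹) * Ci t)) i j) t := by
  have hφ_mono : MonotoneOn φ (Set.Ico t₀ T) :=
    monotoneOn_of_hasDerivWithinAt_nonneg (convex_Ico t₀ T)
      (fun t ht => (hφ t ht).continuousAt.continuousWithinAt)
      (fun t ht => (hφ t (interior_subset ht)).hasDerivWithinAt)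
      (fun t _ => mul_nonneg (div_pos hμ hη).le
        (Real.rpow_nonneg_of_abs_le_half _ (by norm_num [abs_of_pos])))
  have hdet_pos : ∀ t ∈ Set.Ico t₀ T, 0 < (Ci0 + φ t • Cbar).det := fun t ht =>
    have hφt : 0 ≤ φ t := hφ₀ ▸ hφ_mono ⟨le_rfl, ht.1.trans_lt ht.2⟩ ht ht.1
    (hCi0.add_posSemidef (hCbar.posSemidef.smul hφt)).det_pos
  obtain rfl : Ci = fun t => unimodularPart (Ci0 + φ t • Cbar) := funext hCi
  refine ⟨?_, fun t ht i j =>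
    hasDerivAt_unimodularPart_pencil_apply (hφ t ht) (hdet_pos t ht) i j⟩
  simp only [hφ₀, zero_smul, add_zero, unimodularPart_of_det_eq_one hCi0_det]

/-- Reduction of the six-dimensional flow rule to a one-dimensional ODE:
the unimodular parts of `Ci0 + φ(t) C̄` solve the evolution equation. -/
theorem reduction_to_one_dimensional_flow (μ η t₀ T : ℝ) (hμ : 0 < μ) (hη : 0 < η)
    (Cbar Ci0 : Matrix (Fin 3) (Fin 3) ℝ)
    (hCbar : Cbar.PosDef) (hCbar_det : Cbar.det = 1)
    (hCi0 : Ci0.PosDef) (hCi0_det : Ci0.det = 1)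
    (φ : ℝ → ℝ) (hφ₀ : φ t₀ = 0)
    (hφ : ∀ t ∈ Set.Ico t₀ T,
      HasDerivAt φ (μ / η * (Ci0 + φ t • Cbar).det ^ ((1 : ℝ) / 3)) t)
    (Ci : ℝ → Matrix (Fin 3) (Fin 3) ℝ)
    (hCi : ∀ t, Ci t =
      ((Ci0 + φ t • Cbar).det ^ (-(1 : ℝ) / 3)) • (Ci0 + φ t • Cbar)) :
    Ci t₀ = Ci0 ∧
      ∀ t ∈ Set.Ico t₀ T, ∀ i j,
        HasDerivAt (fun s => Ci s i j)
          (((μ / η) • (dev (Cbar * (Ci t)⁻¹) * Ci t)) i j) t :=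
  reduction_to_one_dimensional_flow_general μ η t₀ T hμ hη Cbar Ci0 hCbar hCi0 hCi0_det φ hφ₀ hφ Ci
    hCi
end
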